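/- arXiv:2405.15890 — 5 statements merged into one kernel-verified Lean document; each statement's English description precedes it below -/
import Mathlib

section
/- Let γ : I → ℝ³ be a unit-speed curve satisfying γ''(s) = q · (γ(s) × γ'(s)) with q ≠ 0. Then |γ(s)|² = (s + a₀)² + c₀² for some constants a₀ and c₀, where q²c₀² equals the constant squared curvature |γ''|². -/
/-!
Along the trajectory the radial velocity `p = γ ⬝ᵥ γ'` satisfies `p' = |γ'|² + γ ⬝ᵥ γ'' = 1`,
since `γ'' = q γ × γ'` is orthogonal to `γ`; hence `p(s) = s + a₀`. Then
`(|γ|² - p²)' = 2p - 2p p' = 0`, and by Lagrange's identity `|γ|² - p² = |γ × γ'|²` for a unit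
vector `γ'`. So `|γ × γ'|² = c₀²` is constant, `|γ|² = (s + a₀)² + c₀²` and `|γ''|² = q² c₀²`.
-/

def dot3 (u v : Fin 3 → ℝ) : ℝ := ∑ i, u i * v i

open Matrix

theorem dot3_eq_dotProduct (u v : Fin 3 → ℝ) : dot3 u v = u ⬝ᵥ v := rfl

theorem HasDerivAt.dotProduct {𝕜 ι : Type*} [NontriviallyNormedField 𝕜] [Fintype ι]
    {u v : 𝕜 → ι → 𝕜} {u' v' : ι → 𝕜} {x : 𝕜}
    (hu : HasDerivAt u u' x) (hv : HasDerivAt v v' x) :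
    HasDerivAt (fun t => u t ⬝ᵥ v t) (u' ⬝ᵥ v x + u x ⬝ᵥ v') x := by
  simp only [_root_.dotProduct, ← Finset.sum_add_distrib]
  exact HasDerivAt.fun_sum fun i _ => (hasDerivAt_pi.1 hu i).mul (hasDerivAt_pi.1 hv i)

theorem Convex.eq_of_hasDerivAt_zero {E : Type*} [NormedAddCommGroup E] [NormedSpace ℝ E]
    {f : ℝ → E} {I : Set ℝ} (hI : Convex ℝ I) (hf : ∀ x ∈ I, HasDerivAt f 0 x)
    {x y : ℝ} (hx : x ∈ I) (hy : y ∈ I) : f x = f y := by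
  have h := hI.norm_image_sub_le_of_norm_hasDerivWithin_le (C := 0)
    (fun z hz => (hf z hz).hasDerivWithinAt) (fun _ _ => norm_zero.le) hy hx
  rwa [zero_mul, norm_le_zero_iff, sub_eq_zero] at h

theorem cross_dot_cross_self_of_dotProduct_self_eq_one {R : Type*} [CommRing R]
    {v w : Fin 3 → R} (hw : w ⬝ᵥ w = 1) :
    v ⨯₃ w ⬝ᵥ v ⨯₃ w = v ⬝ᵥ v - (v ⬝ᵥ w) ^ 2 := by
  rw [cross_dot_cross, hw, dotProduct_comm w v]
  ring

theorem hasDerivAt_dotProduct_self_sub_sq {ι : Type*} [Fintype ι] {γ g : ℝ → ι → ℝ} {s : ℝ}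
    (hγ : HasDerivAt γ (g s) s) (hp : HasDerivAt (fun t => γ t ⬝ᵥ g t) 1 s) :
    HasDerivAt (fun t => γ t ⬝ᵥ γ t - (γ t ⬝ᵥ g t) ^ 2) 0 s := by
  have h := (hγ.dotProduct hγ).sub (hp.pow 2)
  rwa [dotProduct_comm (g s), Nat.cast_ofNat, pow_one, mul_one, ← two_mul, sub_self] at h

theorem hasDerivAt_dotProduct_one_of_hasDerivAt_smul_cross {γ g : ℝ → Fin 3 → ℝ} {q s : ℝ}
    (hγ : HasDerivAt γ (g s) s) (hg : HasDerivAt g (q • γ s ⨯₃ g s) s)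
    (hunit : g s ⬝ᵥ g s = 1) :
    HasDerivAt (fun t => γ t ⬝ᵥ g t) 1 s := by
  have h := hγ.dotProduct hg
  rwa [hunit, dotProduct_smul, dot_self_cross, smul_zero, add_zero] at h

theorem stmt4_general (I : Set ℝ) (hconv : Convex ℝ I) (q : ℝ)
    (γ g g' : ℝ → (Fin 3 → ℝ))
    (hd1 : ∀ s ∈ I, HasDerivAt γ (g s) s)
    (hd2 : ∀ s ∈ I, HasDerivAt g (g' s) s)
    (hunit : ∀ s ∈ I, dot3 (g s) (g s) = 1)
    (heq : ∀ s ∈ I, g' s = q • crossProduct (γ s) (g s)) :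
    ∃ a₀ c₀ : ℝ, (∀ s ∈ I, dot3 (γ s) (γ s) = (s + a₀) ^ 2 + c₀ ^ 2) ∧
      (∀ s ∈ I, dot3 (g' s) (g' s) = q ^ 2 * c₀ ^ 2) := by
  rcases I.eq_empty_or_nonempty with rfl | ⟨s₀, hs₀⟩
  · simp
  simp only [dot3_eq_dotProduct] at hunit ⊢
  have hp : ∀ s ∈ I, HasDerivAt (fun t => γ t ⬝ᵥ g t) 1 s := fun s hs =>
    hasDerivAt_dotProduct_one_of_hasDerivAt_smul_cross (hd1 s hs) (heq s hs ▸ hd2 s hs)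
      (hunit s hs)
  have hradial : ∀ s ∈ I, γ s ⬝ᵥ g s = s + (γ s₀ ⬝ᵥ g s₀ - s₀) := fun s hs => by
    have := hconv.eq_of_hasDerivAt_zero (f := fun t => γ t ⬝ᵥ g t - t)
      (fun t ht => by simpa using (hp t ht).fun_sub (hasDerivAt_id' t)) hs hs₀
    linarith
  have hcross : ∀ s ∈ I, γ s ⨯₃ g s ⬝ᵥ γ s ⨯₃ g s = γ s₀ ⨯₃ g s₀ ⬝ᵥ γ s₀ ⨯₃ g s₀ := by
    intro s hs
    simp only [cross_dot_cross_self_of_dotProduct_self_eq_one (hunit _ hs),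
      cross_dot_cross_self_of_dotProduct_self_eq_one (hunit _ hs₀)]
    exact hconv.eq_of_hasDerivAt_zero
      (fun t ht => hasDerivAt_dotProduct_self_sub_sq (hd1 t ht) (hp t ht)) hs hs₀
  have hsq : Real.sqrt (γ s₀ ⨯₃ g s₀ ⬝ᵥ γ s₀ ⨯₃ g s₀) ^ 2 = γ s₀ ⨯₃ g s₀ ⬝ᵥ γ s₀ ⨯₃ g s₀ :=
    Real.sq_sqrt (by simpa using dotProduct_star_self_nonneg (γ s₀ ⨯₃ g s₀))
  refine ⟨γ s₀ ⬝ᵥ g s₀ - s₀, Real.sqrt (γ s₀ ⨯₃ g s₀ ⬝ᵥ γ s₀ ⨯₃ g s₀), fun s hs => ?_,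
    fun s hs => ?_⟩
  · have := cross_dot_cross_self_of_dotProduct_self_eq_one (v := γ s) (hunit s hs)
    rw [hsq, ← hcross s hs, this, hradial s hs]
    ring
  · rw [heq s hs, hsq, ← hcross s hs, dotProduct_smul, smul_dotProduct, smul_eq_mul,
      smul_eq_mul, ← mul_assoc, sq]

/-- For a unit-speed conformal trajectory of the radial field,
`|γ(s)|² = (s+a₀)² + c₀²` with `q² c₀²` the constant squared curvature. -/
theorem stmt4 (I : Set ℝ) (hI : IsOpen I) (hconv : Convex ℝ I) (q : ℝ) (hq : q ≠ 0)
    (γ g g' : ℝ → (Fin 3 → ℝ))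
    (hd1 : ∀ s ∈ I, HasDerivAt γ (g s) s)
    (hd2 : ∀ s ∈ I, HasDerivAt g (g' s) s)
    (hunit : ∀ s ∈ I, dot3 (g s) (g s) = 1)
    (heq : ∀ s ∈ I, g' s = q • crossProduct (γ s) (g s)) :
    ∃ a₀ c₀ : ℝ, (∀ s ∈ I, dot3 (γ s) (γ s) = (s + a₀) ^ 2 + c₀ ^ 2) ∧
      (∀ s ∈ I, dot3 (g' s) (g' s) = q ^ 2 * c₀ ^ 2) :=
  stmt4_general I hconv q γ g g' hd1 hd2 hunit heq
end

section
/- Let γ : I → ℝ³ be a unit-speed curve satisfying γ''(s) = q · (γ(s) × γ'(s)) with q ≠ 0 and |γ''| never vanishing. Then γ(s) = (s + a₀)·γ'(s) + (1/q)·(γ'(s) × γ''(s)) for some constant a₀, i.e., the position vector lies in the rectifying plane at each point. -/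
/-!
Differentiating `γ ⬝ᵥ γ'` gives `|γ'|² + γ ⬝ᵥ γ'' = 1 + q γ ⬝ᵥ (γ × γ') = 1`, so
`γ(s) ⬝ᵥ γ'(s) = s + a₀` on the connected interval. Since `γ'` is a unit vector,
`γ = (γ ⬝ᵥ γ') γ' + γ' × (γ × γ')`, and `γ' × γ'' = q γ' × (γ × γ')`.
-/

open Matrix

theorem HasDerivAt.dotProduct_s5 {𝕜 ι : Type*} [NontriviallyNormedField 𝕜] [Fintype ι]
    {f g : 𝕜 → ι → 𝕜} {f' g' : ι → 𝕜} {x : 𝕜}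
    (hf : HasDerivAt f f' x) (hg : HasDerivAt g g' x) :
    HasDerivAt (fun t => f t ⬝ᵥ g t) (f' ⬝ᵥ g x + f x ⬝ᵥ g') x := by
  have hfi := hasDerivAt_pi.mp hf
  have hgi := hasDerivAt_pi.mp hg
  have hsum := HasDerivAt.fun_sum (u := Finset.univ) fun i _ => (hfi i).fun_mul (hgi i)
  rwa [Finset.sum_add_distrib] at hsum

theorem exists_dotProduct_eq_add_of_unit_tangent {ι : Type*} [Fintype ι] {I : Set ℝ}
    (hI : IsOpen I) (hI' : IsPreconnected I) {γ g g' : ℝ → ι → ℝ}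
    (hd1 : ∀ s ∈ I, HasDerivAt γ (g s) s) (hd2 : ∀ s ∈ I, HasDerivAt g (g' s) s)
    (hunit : ∀ s ∈ I, g s ⬝ᵥ g s = 1) (hperp : ∀ s ∈ I, γ s ⬝ᵥ g' s = 0) :
    ∃ a, ∀ s ∈ I, γ s ⬝ᵥ g s = s + a := by
  have hderiv : ∀ s ∈ I, HasDerivAt (fun t => γ t ⬝ᵥ g t) 1 s := fun s hs => by
    simpa only [hunit s hs, hperp s hs, add_zero] using (hd1 s hs).dotProduct_s5 (hd2 s hs)
  exact hI.exists_eq_add_of_deriv_eq hI'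
    (fun s hs => (hderiv s hs).differentiableAt.differentiableWithinAt)
    differentiableOn_id (fun s hs => by simp [(hderiv s hs).deriv])

theorem eq_smul_add_cross_cross_of_dotProduct_self_eq_one {R : Type*} [CommRing R]
    (x t : Fin 3 → R) (ht : t ⬝ᵥ t = 1) :
    x = (x ⬝ᵥ t) • t + t ⨯₃ (x ⨯₃ t) := by
  rw [cross_cross_eq_smul_sub_smul', ht, one_smul, add_sub_cancel]

theorem stmt5_general (I : Set ℝ) (hI : IsOpen I) (hconv : Convex ℝ I) (q : ℝ) (hq : q ≠ 0)
    (γ g g' : ℝ → (Fin 3 → ℝ))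
    (hd1 : ∀ s ∈ I, HasDerivAt γ (g s) s)
    (hd2 : ∀ s ∈ I, HasDerivAt g (g' s) s)
    (hunit : ∀ s ∈ I, dot3 (g s) (g s) = 1)
    (heq : ∀ s ∈ I, g' s = q • crossProduct (γ s) (g s)) :
    ∃ a₀ : ℝ, ∀ s ∈ I,
      γ s = (s + a₀) • g s + q⁻¹ • crossProduct (g s) (g' s) := by
  have hperp : ∀ s ∈ I, γ s ⬝ᵥ g' s = 0 := fun s hs => by
    rw [heq s hs, dotProduct_smul, dot_self_cross, smul_zero]
  obtain ⟨a₀, ha₀⟩ := exists_dotProduct_eq_add_of_unit_tangent hI hconv.isPreconnected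
    hd1 hd2 hunit hperp
  refine ⟨a₀, fun s hs => ?_⟩
  rw [heq s hs, map_smul, smul_smul, inv_mul_cancel₀ hq, one_smul, ← ha₀ s hs]
  exact eq_smul_add_cross_cross_of_dotProduct_self_eq_one _ _ (hunit s hs)

/-- A unit-speed conformal trajectory of the radial field with nonvanishing
curvature satisfies `γ = (s+a₀) γ' + (1/q) γ' × γ''`. -/
theorem stmt5 (I : Set ℝ) (hI : IsOpen I) (hconv : Convex ℝ I) (q : ℝ) (hq : q ≠ 0)
    (γ g g' : ℝ → (Fin 3 → ℝ))
    (hd1 : ∀ s ∈ I, HasDerivAt γ (g s) s)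
    (hd2 : ∀ s ∈ I, HasDerivAt g (g' s) s)
    (hunit : ∀ s ∈ I, dot3 (g s) (g s) = 1)
    (hcurv : ∀ s ∈ I, g' s ≠ 0)
    (heq : ∀ s ∈ I, g' s = q • crossProduct (γ s) (g s)) :
    ∃ a₀ : ℝ, ∀ s ∈ I,
      γ s = (s + a₀) • g s + q⁻¹ • crossProduct (g s) (g' s) :=
  stmt5_general I hI hconv q hq γ g g' hd1 hd2 hunit heq
end

section
/- Let a ∈ ℝ⁴ and let γ : I → S³ ⊂ ℝ⁴ be a unit-speed curve satisfying γ''(s) + γ(s) = q · (V(γ(s)) ×_{S³} γ'(s)) where V(p) = a − ⟨a,p⟩p and ×_{S³} is the spherical cross product. Then the function f(s) = ⟨γ(s), a⟩ satisfies f'' + f = 0, hence f(s) = a₁ cos s + a₂ sin s for constants a₁, a₂. -/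
def dot4 (u v : Fin 4 → ℝ) : ℝ := ∑ i, u i * v i

/-- Determinant of the `4×4` matrix with rows (equivalently columns)
`u, v, w, p`. -/
def det4 (u v w p : Fin 4 → ℝ) : ℝ := (Matrix.of ![u, v, w, p]).det

section Oscillator

variable {E : Type*} [NormedAddCommGroup E] [NormedSpace ℝ E]

theorem Convex.eq_of_hasDerivAt_zero_s8 {I : Set ℝ} (hI : Convex ℝ I) {F : ℝ → E}
    (hF : ∀ s ∈ I, HasDerivAt F 0 s) {s t : ℝ} (hs : s ∈ I) (ht : t ∈ I) : F s = F t := by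
  have h := Convex.norm_image_sub_le_of_norm_hasDerivWithin_le (C := 0)
    (fun x hx => (hF x hx).hasDerivWithinAt) (fun _ _ => norm_zero.le) hI ht hs
  rwa [zero_mul, norm_le_zero_iff, sub_eq_zero] at h

theorem Convex.exists_eq_cos_smul_add_sin_smul {I : Set ℝ} (hI : Convex ℝ I) {f f' : ℝ → E}
    (hf : ∀ s ∈ I, HasDerivAt f (f' s) s) (hf' : ∀ s ∈ I, HasDerivAt f' (-f s) s) :
    ∃ a₁ a₂ : E, ∀ s ∈ I, f s = Real.cos s • a₁ + Real.sin s • a₂ := by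
  rcases I.eq_empty_or_nonempty with rfl | ⟨s₀, hs₀⟩
  · exact ⟨0, 0, by simp⟩
  -- `u` and `v` are conserved along `f'' = -f`; their values are the coefficients.
  set u : ℝ → E := fun s => Real.cos s • f s - Real.sin s • f' s
  set v : ℝ → E := fun s => Real.sin s • f s + Real.cos s • f' s
  have hu : ∀ s ∈ I, HasDerivAt u 0 s := fun s hs =>
    (((Real.hasDerivAt_cos s).smul (hf s hs)).sub
      ((Real.hasDerivAt_sin s).smul (hf' s hs))).congr_deriv
      (by simp only [smul_neg, neg_smul]; abel)
  have hv : ∀ s ∈ I, HasDerivAt v 0 s := fun s hs =>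
    (((Real.hasDerivAt_sin s).smul (hf s hs)).add
      ((Real.hasDerivAt_cos s).smul (hf' s hs))).congr_deriv
      (by simp only [smul_neg, neg_smul]; abel)
  refine ⟨u s₀, v s₀, fun s hs => ?_⟩
  rw [← hI.eq_of_hasDerivAt_zero_s8 hu hs hs₀, ← hI.eq_of_hasDerivAt_zero_s8 hv hs hs₀]
  linear_combination (norm := module) -(Real.cos_sq_add_sin_sq s) • f s

end Oscillator

lemma dot4_eq_dotProduct (u v : Fin 4 → ℝ) : dot4 u v = u ⬝ᵥ v := rfl

lemma HasDerivAt.dot4_const {γ : ℝ → (Fin 4 → ℝ)} {d : Fin 4 → ℝ} {s : ℝ}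
    (h : HasDerivAt γ d s) (a : Fin 4 → ℝ) :
    HasDerivAt (fun t => dot4 (γ t) a) (dot4 d a) s :=
  HasDerivAt.fun_sum fun i _ => (hasDerivAt_pi.mp h i).mul_const _

lemma det4_self_left_eq_zero (u v w : Fin 4 → ℝ) : det4 u v u w = 0 :=
  Matrix.det_zero_of_row_eq (i := 0) (j := 2) (by decide) (by ext k; simp)

lemma dot4_sub_dot4_smul_self_eq_zero {p : Fin 4 → ℝ} (hp : dot4 p p = 1) (a : Fin 4 → ℝ) :
    dot4 (a - dot4 a p • p) p = 0 := by
  simp only [dot4_eq_dotProduct] at hp ⊢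
  rw [sub_dotProduct, smul_dotProduct, hp, smul_eq_mul, mul_one, sub_self]

/-- `x` is orthogonal to `p`, and to the tangent vector `a - ⟨a,p⟩p` because that vector
then occurs twice in the determinant. -/
lemma dot4_eq_zero_of_sphericalCross {a p v x : Fin 4 → ℝ} (hp : dot4 p p = 1)
    (hxp : dot4 x p = 0)
    (hx : ∀ w, dot4 w p = 0 → dot4 x w = det4 (a - dot4 a p • p) v w p) :
    dot4 x a = 0 := by
  have h := hx _ (dot4_sub_dot4_smul_self_eq_zero hp a)
  rw [det4_self_left_eq_zero] at h
  simp only [dot4_eq_dotProduct] at h hxp ⊢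
  rwa [dotProduct_sub, dotProduct_smul, hxp, smul_zero, sub_zero] at h

theorem stmt8_general (I : Set ℝ) (hconv : Convex ℝ I)
    (a : Fin 4 → ℝ) (q : ℝ)
    (γ g g' X : ℝ → (Fin 4 → ℝ))
    (hd1 : ∀ s ∈ I, HasDerivAt γ (g s) s)
    (hd2 : ∀ s ∈ I, HasDerivAt g (g' s) s)
    (hsph : ∀ s ∈ I, dot4 (γ s) (γ s) = 1)
    (hXt : ∀ s ∈ I, dot4 (X s) (γ s) = 0)
    (hX : ∀ s ∈ I, ∀ w, dot4 w (γ s) = 0 →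
      dot4 (X s) w = det4 (a - dot4 a (γ s) • γ s) (g s) w (γ s))
    (heq : ∀ s ∈ I, g' s + γ s = q • X s) :
    (∀ s ∈ I, dot4 (g' s) a + dot4 (γ s) a = 0) ∧
    ∃ a₁ a₂ : ℝ, ∀ s ∈ I, dot4 (γ s) a = a₁ * Real.cos s + a₂ * Real.sin s := by
  have hode : ∀ s ∈ I, dot4 (g' s) a + dot4 (γ s) a = 0 := fun s hs => by
    have hXa := dot4_eq_zero_of_sphericalCross (hsph s hs) (hXt s hs) (hX s hs)
    simp only [dot4_eq_dotProduct] at hXa ⊢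
    rw [← add_dotProduct, heq s hs, smul_dotProduct, hXa, smul_zero]
  refine ⟨hode, ?_⟩
  obtain ⟨a₁, a₂, h⟩ := hconv.exists_eq_cos_smul_add_sin_smul (f := fun s => dot4 (γ s) a)
    (fun s hs => (hd1 s hs).dot4_const a)
    (fun s hs => ((hd2 s hs).dot4_const a).congr_deriv (eq_neg_of_add_eq_zero_left (hode s hs)))
  exact ⟨a₁, a₂, fun s hs => by rw [h s hs, smul_eq_mul, smul_eq_mul]; ring⟩

/-- For a unit-speed conformal trajectory on `S³` of `V(p) = a - ⟨a,p⟩p`,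
the function `f(s) = ⟨γ(s), a⟩` satisfies `f'' + f = 0`, hence
`f(s) = a₁ cos s + a₂ sin s`.  Here `X s` is the spherical cross product
`V(γ(s)) ×_{S³} γ'(s)`, characterized by tangency and
`⟨X, w⟩ = det(V, γ', w, γ)` for tangent `w`. -/
theorem stmt8 (I : Set ℝ) (hI : IsOpen I) (hconv : Convex ℝ I)
    (a : Fin 4 → ℝ) (q : ℝ)
    (γ g g' X : ℝ → (Fin 4 → ℝ))
    (hd1 : ∀ s ∈ I, HasDerivAt γ (g s) s)
    (hd2 : ∀ s ∈ I, HasDerivAt g (g' s) s)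
    (hsph : ∀ s ∈ I, dot4 (γ s) (γ s) = 1)
    (hunit : ∀ s ∈ I, dot4 (g s) (g s) = 1)
    (hXt : ∀ s ∈ I, dot4 (X s) (γ s) = 0)
    (hX : ∀ s ∈ I, ∀ w, dot4 w (γ s) = 0 →
      dot4 (X s) w = det4 (a - dot4 a (γ s) • γ s) (g s) w (γ s))
    (heq : ∀ s ∈ I, g' s + γ s = q • X s) :
    (∀ s ∈ I, dot4 (g' s) a + dot4 (γ s) a = 0) ∧
    ∃ a₁ a₂ : ℝ, ∀ s ∈ I, dot4 (γ s) a = a₁ * Real.cos s + a₂ * Real.sin s :=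
  stmt8_general I hconv a q γ g g' X hd1 hd2 hsph hXt hX heq
end

section
/- Let a ∈ ℝ⁴₁ (Minkowski space with signature (+,+,+,−)) and let γ : I → H³ be a unit-speed curve satisfying γ''(s) − γ(s) = q · (V(γ(s)) ×_{H³} γ'(s)) where V(p) = a + ⟨a,p⟩p. Then f(s) = ⟨γ(s), a⟩ satisfies f'' − f = 0, so f(s) = a₁ cosh s + a₂ sinh s for constants a₁, a₂. -/
/-- Lorentzian inner product on `ℝ⁴₁` with signature `(+,+,+,-)`. -/
def ldot (u v : Fin 4 → ℝ) : ℝ := u 0 * v 0 + u 1 * v 1 + u 2 * v 2 - u 3 * v 3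

/-!
Since `V(p) = a + ⟨a,p⟩p` is tangent to `H³` at `p`, the cross product `V ×_{H³} γ'` is
Lorentz-orthogonal to `V` (a determinant with a repeated row) and to `γ`, hence to `a`.
Pairing the equation of motion with `a` then gives `f'' = f` for `f = ⟨γ, a⟩`.  On an interval
this forces `f = a₁ cosh + a₂ sinh`, because `f cosh - f' sinh` and `f' cosh - f sinh` have
zero derivative and recombine to `f`.
-/

open Real

section Ldot

variable (u v w : Fin 4 → ℝ) (c : ℝ)

theorem ldot_add_left : ldot (u + v) w = ldot u w + ldot v w := by
  simp only [ldot, Pi.add_apply]; ring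

theorem ldot_add_right : ldot u (v + w) = ldot u v + ldot u w := by
  simp only [ldot, Pi.add_apply]; ring

theorem ldot_sub_left : ldot (u - v) w = ldot u w - ldot v w := by
  simp only [ldot, Pi.sub_apply]; ring

theorem ldot_smul_left : ldot (c • u) v = c * ldot u v := by
  simp only [ldot, Pi.smul_apply, smul_eq_mul]; ring

theorem ldot_smul_right : ldot u (c • v) = c * ldot u v := by
  simp only [ldot, Pi.smul_apply, smul_eq_mul]; ring

end Ldot

theorem HasDerivAt.ldot_const {v : ℝ → Fin 4 → ℝ} {v' : Fin 4 → ℝ} {s : ℝ}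
    (hv : HasDerivAt v v' s) (a : Fin 4 → ℝ) :
    HasDerivAt (fun t => ldot (v t) a) (ldot v' a) s := by
  have hc (i : Fin 4) : HasDerivAt (fun t => v t i) (v' i) s := hasDerivAt_pi.1 hv i
  exact ((((hc 0).mul_const _).add ((hc 1).mul_const _)).add ((hc 2).mul_const _)).sub
    ((hc 3).mul_const _)

theorem det4_eq_zero_of_first_eq_third (u v p : Fin 4 → ℝ) : det4 u v u p = 0 :=
  Matrix.det_zero_of_row_eq (i := 0) (j := 2) (by decide) rfl

theorem ldot_tangentPart_eq_zero {a p : Fin 4 → ℝ} (hp : ldot p p = -1) :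
    ldot (a + ldot a p • p) p = 0 := by
  rw [ldot_add_left, ldot_smul_left, hp]; ring

/-- `X` plays the role of `(a + ⟨a,p⟩p) ×_{H³} u` at the point `p ∈ H³`. -/
theorem ldot_cross_eq_zero {a p u X : Fin 4 → ℝ} (hp : ldot p p = -1) (hXp : ldot X p = 0)
    (hX : ∀ w, ldot w p = 0 → ldot X w = det4 (a + ldot a p • p) u w p) :
    ldot X a = 0 := by
  have hXV := hX _ (ldot_tangentPart_eq_zero (a := a) hp)
  rwa [det4_eq_zero_of_first_eq_third, ldot_add_right, ldot_smul_right, hXp, mul_zero,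
    add_zero] at hXV

theorem Convex.apply_eq_of_hasDerivAt_zero {I : Set ℝ} (hI : Convex ℝ I) {F : ℝ → ℝ}
    (hF : ∀ s ∈ I, HasDerivAt F 0 s) {s t : ℝ} (hs : s ∈ I) (ht : t ∈ I) : F s = F t := by
  have h := hI.norm_image_sub_le_of_norm_hasDerivWithin_le (C := 0)
    (fun x hx => (hF x hx).hasDerivWithinAt) (fun _ _ => by simp) ht hs
  rw [zero_mul, norm_le_zero_iff, sub_eq_zero] at h
  exact h

theorem Convex.exists_eq_cosh_sinh {I : Set ℝ} (hI : Convex ℝ I) {f f' : ℝ → ℝ}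
    (hf : ∀ s ∈ I, HasDerivAt f (f' s) s) (hf' : ∀ s ∈ I, HasDerivAt f' (f s) s) :
    ∃ a₁ a₂ : ℝ, ∀ s ∈ I, f s = a₁ * cosh s + a₂ * sinh s := by
  rcases I.eq_empty_or_nonempty with rfl | ⟨s₀, hs₀⟩
  · exact ⟨0, 0, fun _ h => h.elim⟩
  set A := fun t => f t * cosh t - f' t * sinh t
  set B := fun t => f' t * cosh t - f t * sinh t
  have hA : ∀ s ∈ I, HasDerivAt A 0 s := fun s hs => by
    refine (((hf s hs).mul (hasDerivAt_cosh s)).sub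
      ((hf' s hs).mul (hasDerivAt_sinh s))).congr_deriv ?_
    ring
  have hB : ∀ s ∈ I, HasDerivAt B 0 s := fun s hs => by
    refine (((hf' s hs).mul (hasDerivAt_cosh s)).sub
      ((hf s hs).mul (hasDerivAt_sinh s))).congr_deriv ?_
    ring
  refine ⟨A s₀, B s₀, fun s hs => ?_⟩
  rw [hI.apply_eq_of_hasDerivAt_zero hA hs₀ hs, hI.apply_eq_of_hasDerivAt_zero hB hs₀ hs]
  linear_combination (-f s) * cosh_sq_sub_sinh_sq s

theorem stmt12_general (I : Set ℝ) (hconv : Convex ℝ I)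
    (a : Fin 4 → ℝ) (q : ℝ)
    (γ g g' X : ℝ → (Fin 4 → ℝ))
    (hd1 : ∀ s ∈ I, HasDerivAt γ (g s) s)
    (hd2 : ∀ s ∈ I, HasDerivAt g (g' s) s)
    (hhyp : ∀ s ∈ I, ldot (γ s) (γ s) = -1 ∧ 0 < γ s 3)
    (hXt : ∀ s ∈ I, ldot (X s) (γ s) = 0)
    (hX : ∀ s ∈ I, ∀ w, ldot w (γ s) = 0 →
      ldot (X s) w = det4 (a + ldot a (γ s) • γ s) (g s) w (γ s))
    (heq : ∀ s ∈ I, g' s - γ s = q • X s) :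
    (∀ s ∈ I, ldot (g' s) a - ldot (γ s) a = 0) ∧
    ∃ a₁ a₂ : ℝ, ∀ s ∈ I, ldot (γ s) a = a₁ * Real.cosh s + a₂ * Real.sinh s := by
  have hf'' : ∀ s ∈ I, ldot (g' s) a - ldot (γ s) a = 0 := fun s hs => by
    rw [← ldot_sub_left, heq s hs, ldot_smul_left,
      ldot_cross_eq_zero (hhyp s hs).1 (hXt s hs) (hX s hs), mul_zero]
  refine ⟨hf'', hconv.exists_eq_cosh_sinh (fun s hs => (hd1 s hs).ldot_const a) fun s hs => ?_⟩
  rw [← sub_eq_zero.1 (hf'' s hs)]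
  exact (hd2 s hs).ldot_const a

/-- For a unit-speed conformal trajectory on `H³` of `V(p) = a + ⟨a,p⟩p`,
the function `f(s) = ⟨γ(s), a⟩` satisfies `f'' - f = 0`, hence
`f(s) = a₁ cosh s + a₂ sinh s`. -/
theorem stmt12 (I : Set ℝ) (hI : IsOpen I) (hconv : Convex ℝ I)
    (a : Fin 4 → ℝ) (q : ℝ)
    (γ g g' X : ℝ → (Fin 4 → ℝ))
    (hd1 : ∀ s ∈ I, HasDerivAt γ (g s) s)
    (hd2 : ∀ s ∈ I, HasDerivAt g (g' s) s)
    (hhyp : ∀ s ∈ I, ldot (γ s) (γ s) = -1 ∧ 0 < γ s 3)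
    (hunit : ∀ s ∈ I, ldot (g s) (g s) = 1)
    (hXt : ∀ s ∈ I, ldot (X s) (γ s) = 0)
    (hX : ∀ s ∈ I, ∀ w, ldot w (γ s) = 0 →
      ldot (X s) w = det4 (a + ldot a (γ s) • γ s) (g s) w (γ s))
    (heq : ∀ s ∈ I, g' s - γ s = q • X s) :
    (∀ s ∈ I, ldot (g' s) a - ldot (γ s) a = 0) ∧
    ∃ a₁ a₂ : ℝ, ∀ s ∈ I, ldot (γ s) a = a₁ * Real.cosh s + a₂ * Real.sinh s :=
  stmt12_general I hconv a q γ g g' X hd1 hd2 hhyp hXt hX heq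
end

section
/- Let α > 0 and define γ : ℝ → ℝ⁴₁ by γ(s) = (0, s, αs² + α − 1/(4α), αs² + α + 1/(4α)). Then γ is a unit-speed curve on the hyperboloid H³ (i.e., ⟨γ,γ⟩ = −1 and ⟨γ',γ'⟩ = 1 in the Lorentz metric), and γ satisfies γ'' − γ = V(γ) ×_{H³} γ' where V(p) = a + ⟨a,p⟩p with a = (1,0,0,0). Moreover ⟨γ''−γ, γ''−γ⟩ = 1, so γ has constant curvature 1. -/
/-!
The curve is a horocycle of the totally geodesic plane `x₁ = 0`: its velocity
`(0, 1, 2αs, 2αs)` and acceleration `(0, 0, 2α, 2α)` are explicit, and all the metric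
identities are polynomial checks. To identify `X`, note that `⟨γ, γ⟩ = -1 ≠ 0`, so a vector
is determined by its pairing with `γ` and with the vectors orthogonal to `γ`; `γ'' - γ` and
`X` both pair to `0` with `γ`, and on the orthogonal complement both pair with `w` as
`det(a, γ', w, γ)`, because `⟨a, γ⟩ = 0` makes `V(γ) = a`.
-/

theorem ldot_comm (u v : Fin 4 → ℝ) : ldot u v = ldot v u := by
  unfold ldot; ring

theorem ldot_sub_smul (u w p : Fin 4 → ℝ) (c : ℝ) :
    ldot u (w - c • p) = ldot u w - c * ldot u p := by
  simp only [ldot, Pi.sub_apply, Pi.smul_apply, smul_eq_mul]; ring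

theorem eq_of_forall_ldot_eq {x y : Fin 4 → ℝ} (h : ∀ w, ldot x w = ldot y w) : x = y := by
  funext i
  fin_cases i
  · simpa [ldot] using h ![1, 0, 0, 0]
  · simpa [ldot] using h ![0, 1, 0, 0]
  · simpa [ldot] using h ![0, 0, 1, 0]
  · simpa [ldot] using h ![0, 0, 0, 1]

theorem eq_of_ldot_eq_of_forall_orthogonal {x y p : Fin 4 → ℝ} (hp : ldot p p ≠ 0)
    (hxp : ldot x p = ldot y p) (h : ∀ w, ldot w p = 0 → ldot x w = ldot y w) : x = y := by
  refine eq_of_forall_ldot_eq fun w => ?_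
  set c := ldot w p / ldot p p
  have hw : ldot (w - c • p) p = 0 := by
    rw [ldot_comm, ldot_sub_smul, ldot_comm, div_mul_cancel₀ _ hp, sub_self]
  have := h _ hw
  rw [ldot_sub_smul, ldot_sub_smul, hxp] at this
  linarith

theorem det4_basis_zero (v w p : Fin 4 → ℝ) :
    det4 ![1, 0, 0, 0] v w p =
      v 1 * (w 2 * p 3 - w 3 * p 2) - v 2 * (w 1 * p 3 - w 3 * p 1) +
        v 3 * (w 1 * p 2 - w 2 * p 1) := by
  simp [det4, Matrix.det_succ_row_zero, Fin.sum_univ_succ]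
  ring

noncomputable def horocycle (α s : ℝ) : Fin 4 → ℝ :=
  ![0, s, α * s ^ 2 + α - 1 / (4 * α), α * s ^ 2 + α + 1 / (4 * α)]

def horocycleVelocity (α s : ℝ) : Fin 4 → ℝ := ![0, 1, 2 * α * s, 2 * α * s]

def horocycleAccel (α : ℝ) : Fin 4 → ℝ := ![0, 0, 2 * α, 2 * α]

theorem hasDerivAt_horocycle (α s : ℝ) :
    HasDerivAt (horocycle α) (horocycleVelocity α s) s := by
  have hq : HasDerivAt (fun s => α * s ^ 2 + α) (2 * α * s) s :=
    (((hasDerivAt_pow 2 s).const_mul α).add_const α).congr_deriv (by ring)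
  refine hasDerivAt_pi.2 fun i => ?_
  fin_cases i
  exacts [hasDerivAt_const s 0, hasDerivAt_id s, hq.sub_const _, hq.add_const _]

theorem hasDerivAt_horocycleVelocity (α s : ℝ) :
    HasDerivAt (horocycleVelocity α) (horocycleAccel α) s := by
  have hl : HasDerivAt (fun s => 2 * α * s) (2 * α) s :=
    ((hasDerivAt_id' s).const_mul (2 * α)).congr_deriv (mul_one _)
  refine hasDerivAt_pi.2 fun i => ?_
  fin_cases i
  exacts [hasDerivAt_const s 0, hasDerivAt_const s 1, hl, hl]

section

variable {α : ℝ}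

theorem ldot_horocycle_self (hα : α ≠ 0) (s : ℝ) :
    ldot (horocycle α s) (horocycle α s) = -1 := by
  simp only [ldot, horocycle, Matrix.cons_val_zero, Matrix.cons_val_one, Matrix.cons_val]
  field_simp; ring

theorem horocycle_three_pos (hα : 0 < α) (s : ℝ) : 0 < horocycle α s 3 := by
  change 0 < α * s ^ 2 + α + 1 / (4 * α)
  positivity

theorem ldot_horocycleVelocity_self (s : ℝ) :
    ldot (horocycleVelocity α s) (horocycleVelocity α s) = 1 := by
  simp [ldot, horocycleVelocity]

theorem ldot_basis_zero_horocycle (s : ℝ) : ldot ![1, 0, 0, 0] (horocycle α s) = 0 := by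
  simp [ldot, horocycle]

theorem ldot_horocycleAccel_sub_horocycle (hα : α ≠ 0) (s : ℝ) :
    ldot (horocycleAccel α - horocycle α s) (horocycle α s) = 0 := by
  simp only [ldot, horocycle, horocycleAccel, Pi.sub_apply, Matrix.cons_val_zero,
    Matrix.cons_val_one, Matrix.cons_val]
  field_simp; ring

theorem ldot_horocycleAccel_sub_horocycle_self (hα : α ≠ 0) (s : ℝ) :
    ldot (horocycleAccel α - horocycle α s) (horocycleAccel α - horocycle α s) = 1 := by
  simp only [ldot, horocycle, horocycleAccel, Pi.sub_apply, Matrix.cons_val_zero,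
    Matrix.cons_val_one, Matrix.cons_val]
  field_simp; ring

theorem ldot_horocycleAccel_sub_horocycle_eq_det4 (hα : α ≠ 0) (s : ℝ) (w : Fin 4 → ℝ) :
    ldot (horocycleAccel α - horocycle α s) w =
      det4 ![1, 0, 0, 0] (horocycleVelocity α s) w (horocycle α s) := by
  simp only [det4_basis_zero, ldot, horocycle, horocycleVelocity, horocycleAccel, Pi.sub_apply,
    Matrix.cons_val_zero, Matrix.cons_val_one, Matrix.cons_val]
  field_simp; ring

end

/-- The explicit curve `γ(s) = (0, s, αs² + α - 1/(4α), αs² + α + 1/(4α))` is a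
unit-speed curve on `H³` and a conformal trajectory (with `q = 1`) of
`V(p) = a + ⟨a,p⟩p`, `a = (1,0,0,0)`, with constant curvature `1`. -/
theorem stmt14 (α : ℝ) (hα : 0 < α) (a : Fin 4 → ℝ) (ha : a = ![1, 0, 0, 0])
    (γ g g' X : ℝ → (Fin 4 → ℝ))
    (hγ : γ = fun s => ![0, s, α * s ^ 2 + α - 1 / (4 * α),
      α * s ^ 2 + α + 1 / (4 * α)])
    (hd1 : ∀ s, HasDerivAt γ (g s) s)
    (hd2 : ∀ s, HasDerivAt g (g' s) s)
    (hXt : ∀ s, ldot (X s) (γ s) = 0)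
    (hX : ∀ s, ∀ w, ldot w (γ s) = 0 →
      ldot (X s) w = det4 (a + ldot a (γ s) • γ s) (g s) w (γ s)) :
    (∀ s, ldot (γ s) (γ s) = -1) ∧ (∀ s, 0 < γ s 3) ∧
    (∀ s, ldot (g s) (g s) = 1) ∧
    (∀ s, g' s - γ s = X s) ∧
    (∀ s, ldot (g' s - γ s) (g' s - γ s) = 1) := by
  have hα₀ : α ≠ 0 := hα.ne'
  replace hγ : γ = horocycle α := hγ
  subst hγ ha
  obtain rfl : g = horocycleVelocity α :=
    funext fun s => (hd1 s).unique (hasDerivAt_horocycle α s)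
  obtain rfl : g' = fun _ => horocycleAccel α :=
    funext fun s => (hd2 s).unique (hasDerivAt_horocycleVelocity α s)
  refine ⟨ldot_horocycle_self hα₀, horocycle_three_pos hα, ldot_horocycleVelocity_self,
    fun s => ?_, ldot_horocycleAccel_sub_horocycle_self hα₀⟩
  have hp : ldot (horocycle α s) (horocycle α s) ≠ 0 := by
    rw [ldot_horocycle_self hα₀]; norm_num
  refine eq_of_ldot_eq_of_forall_orthogonal hp
    ((ldot_horocycleAccel_sub_horocycle hα₀ s).trans (hXt s).symm) fun w hw => ?_
  rw [hX s w hw, ldot_basis_zero_horocycle, zero_smul, add_zero,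
    ldot_horocycleAccel_sub_horocycle_eq_det4 hα₀]
end
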